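/- arXiv:2503.24318 — 3 statements merged into one kernel-verified Lean document; each statement's English description precedes it below -/
import Mathlib

section
/- Let t be a uniformly random subset of {1,…,N} of size m < N/2, and let q ∈ {0,1}^N be a fixed string. Then the probability that |w(q_t) − w(q_{−t})| > δ is at most 2·exp(−δ²mN/(N+2)). -/
/-!
Let `A` be the set of positions where `q` is `1` and `X = #(t ∩ A)`. For `#t = m` the difference
`w(q_t) - w(q_{-t})` is an affine function of `X`, so the event is a deviation of `X` from its
mean `m #A / N` by `a = δ m (N - m) / N`; a downward deviation for `q` is an upward one for `!q`.

Following Bouman and Fehr, the moment generating function of `X` for a uniformly random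
`m`-subset of a `(d + m)`-set is bounded by induction on `m` with `d` fixed: removing a uniformly
random element `x` from a uniform `(m + 1)`-subset leaves a uniform `m`-subset of the other
elements, and Hoeffding's lemma for the indicator of `x ∈ A` adds `s² (d / (d + m))² / 8` to the
exponent. Hence `E exp (s (X - E X)) ≤ exp (s² c)` with `c = d² / 8 ∑_{i < m} (d + i)⁻²`, and
Chernoff's bound gives `exp (-a² / (4 c))`. For `d = N - m`, telescoping
`1 / x² ≤ 1 / (x - ½) - 1 / (x + ½)` bounds `c` by `d² m / (2 (2d - 1) (2N - 1))`, which for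
`2m < N` turns the exponent into `δ² m N / (N + 2)`.
-/

/-- Relative Hamming weight of the substring of `q` indexed by the finset `t`. -/
noncomputable def relWtOn {N : ℕ} (q : Fin N → Bool) (t : Finset (Fin N)) : ℝ :=
  ((t.filter fun i => q i = true).card : ℝ) / t.card

open Real Finset

open ProbabilityTheory MeasureTheory in
theorem bernoulli_mgf_le_exp {p : ℝ} (hp₀ : 0 ≤ p) (hp₁ : p ≤ 1) (y : ℝ) :
    p * exp y + (1 - p) ≤ exp (p * y + y ^ 2 / 8) := by
  let μ : Measure ℝ := Ber((1 : ℝ), 0, ⟨p, hp₀, hp₁⟩)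
  have hint (f : ℝ → ℝ) : ∫ x, f x ∂μ = p * f 1 + (1 - p) * f 0 := by
    simp [μ, integral_bernoulliMeasure]
  have hIcc : ∀ᵐ x ∂μ, x ∈ Set.Icc (0 : ℝ) 1 := by
    rw [ae_iff]
    exact bernoulliMeasure_apply_of_notMem_of_notMem _ measurableSet_Icc.compl
      (by simp) (by simp)
  have hcentred := (hasSubgaussianMGF_of_mem_Icc aemeasurable_id hIcc).mgf_le y
  simp only [mgf, id, hint] at hcentred
  norm_num at hcentred
  calc p * exp y + (1 - p)
      = exp (p * y) * (p * exp (y * (1 - p)) + (1 - p) * exp (-(y * p))) := by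
        rw [mul_add, mul_left_comm, mul_left_comm (exp (p * y)), ← exp_add, ← exp_add,
          show p * y + y * (1 - p) = y by ring, show p * y + -(y * p) = 0 by ring, exp_zero,
          mul_one]
    _ ≤ exp (p * y) * exp (1 / 4 * y ^ 2 / 2) := by gcongr
    _ = exp (p * y + y ^ 2 / 8) := by rw [← exp_add]; ring_nf

theorem mul_exp_add_sub_mul_exp_le {d m k s : ℝ} (hn : 0 < d + m) (hk₀ : 0 ≤ k)
    (hk : k ≤ d + m + 1) :
    k * exp (s + s * m * (k - 1) / (d + m)) + (d + m + 1 - k) * exp (s * m * k / (d + m)) ≤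
      (d + m + 1) * exp (s * (m + 1) * k / (d + m + 1) + s ^ 2 * (d / (d + m)) ^ 2 / 8) := by
  set N := d + m + 1
  set y := s * (d / (d + m))
  have hN : 0 < N := by positivity
  have hber := bernoulli_mgf_le_exp (div_nonneg hk₀ hN.le) ((div_le_one hN).2 hk) y
  calc _ = exp (s * m * k / (d + m)) * (N * (k / N * exp y + (1 - k / N))) := by
        rw [show s + s * m * (k - 1) / (d + m) = s * m * k / (d + m) + y by
          simp only [y]; field_simp; ring, exp_add]
        field_simp
    _ ≤ exp (s * m * k / (d + m)) * (N * exp (k / N * y + y ^ 2 / 8)) := by gcongr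
    _ = _ := by
        rw [mul_left_comm, ← exp_add]
        congr 2
        simp only [N, y]
        field_simp
        ring

/-- Half the sub-Gaussian variance proxy of `#(t ∩ A)` for a uniformly random `m`-subset `t`
of a `(d + m)`-element set. -/
noncomputable def samplingProxy (d m : ℕ) : ℝ :=
  d ^ 2 / 8 * ∑ i ∈ range m, 1 / ((d : ℝ) + i) ^ 2

theorem samplingProxy_zero (d : ℕ) : samplingProxy d 0 = 0 := by
  simp [samplingProxy]

theorem samplingProxy_succ (d m : ℕ) :
    samplingProxy d (m + 1) = samplingProxy d m + (d / ((d : ℝ) + m)) ^ 2 / 8 := by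
  rw [samplingProxy, samplingProxy, sum_range_succ, div_pow]
  ring

theorem samplingProxy_pos {d m : ℕ} (hd : 0 < d) (hm : 0 < m) : 0 < samplingProxy d m :=
  mul_pos (by positivity) (sum_pos (fun i _ => by positivity) (nonempty_range_iff.2 hm.ne'))

theorem samplingProxy_le {d : ℕ} (hd : 0 < d) (m : ℕ) :
    samplingProxy d m ≤ d ^ 2 * m / (2 * ((2 * d - 1) * (2 * d + 2 * m - 1))) := by
  have hd' : (1 : ℝ) ≤ d := by exact_mod_cast hd
  have hm : (0 : ℝ) ≤ m := m.cast_nonneg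
  set f : ℕ → ℝ := fun i => 2 / (2 * d + 2 * i - 1)
  -- `1 / x ^ 2 ≤ 1 / (x ^ 2 - 1 / 4) = f i - f (i + 1)` with `x = d + i`, which telescopes
  have hterm (i : ℕ) : 1 / ((d : ℝ) + i) ^ 2 ≤ f i - f (i + 1) := by
    have hi : (0 : ℝ) ≤ i := i.cast_nonneg
    simp only [f]
    push_cast
    rw [div_sub_div _ _ (by linarith) (by linarith), div_le_div_iff₀ (by positivity) (by nlinarith)]
    nlinarith
  calc samplingProxy d m ≤ d ^ 2 / 8 * ∑ i ∈ range m, (f i - f (i + 1)) := by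
        unfold samplingProxy; gcongr with i; exact hterm i
    _ = d ^ 2 * m / (2 * ((2 * d - 1) * (2 * d + 2 * m - 1))) := by
        have h₁ : 2 * (d : ℝ) - 1 ≠ 0 := by linarith
        have h₂ : 2 * (d : ℝ) + 2 * m - 1 ≠ 0 := by linarith
        rw [sum_range_sub']
        simp only [f, Nat.cast_zero, mul_zero, add_zero]
        rw [div_sub_div _ _ h₁ h₂, div_mul_div_comm, div_eq_div_iff (by positivity) (by positivity)]
        ring

theorem card_filter_le_exp_mul_sum_exp {ι : Type*} (S : Finset ι) (f : ι → ℝ) (θ : ℝ) {s : ℝ}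
    (hs : 0 ≤ s) : (#(S.filter (θ ≤ f ·)) : ℝ) ≤ exp (-(s * θ)) * ∑ i ∈ S, exp (s * f i) := by
  calc (#(S.filter (θ ≤ f ·)) : ℝ) = ∑ i ∈ S.filter (θ ≤ f ·), 1 := by simp
    _ ≤ ∑ i ∈ S.filter (θ ≤ f ·), exp (-(s * θ)) * exp (s * f i) := by
        refine sum_le_sum fun i hi => ?_
        rw [← exp_add]
        exact one_le_exp (by nlinarith [(mem_filter.1 hi).2])
    _ ≤ ∑ i ∈ S, exp (-(s * θ)) * exp (s * f i) :=
        sum_le_sum_of_subset_of_nonneg (filter_subset _ _) fun _ _ _ => by positivity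
    _ = exp (-(s * θ)) * ∑ i ∈ S, exp (s * f i) := (mul_sum _ _ _).symm

section

variable {α : Type*} [DecidableEq α]

theorem Finset.sum_ite_mem_of_subset {U A : Finset α} (hA : A ⊆ U) (a b : ℝ) :
    ∑ x ∈ U, (if x ∈ A then a else b) = #A * a + (#U - #A) * b := by
  rw [← sum_sdiff hA, sum_congr rfl fun x hx => if_neg (mem_sdiff.1 hx).2,
    sum_congr rfl fun x hx => if_pos hx, sum_const, sum_const, card_sdiff_of_subset hA,
    nsmul_eq_mul, nsmul_eq_mul, Nat.cast_sub (card_le_card hA)]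
  ring

theorem sum_exp_card_insert_inter (U A : Finset α) (x : α) (m : ℕ) (s : ℝ) :
    ∑ t ∈ (U.erase x).powersetCard m, exp (s * #(insert x t ∩ A)) =
      (if x ∈ A then exp s else 1) *
        ∑ t ∈ (U.erase x).powersetCard m, exp (s * #(t ∩ A.erase x)) := by
  rw [mul_sum]
  refine sum_congr rfl fun t ht => ?_
  have hxt : x ∉ t := fun h => by simpa using (mem_powersetCard.1 ht).1 h
  split_ifs with hxA
  · rw [insert_inter_of_mem hxA, card_insert_of_notMem fun h => hxt (mem_inter.1 h).1,
      inter_erase, erase_eq_of_notMem fun h => hxt (mem_inter.1 h).1, ← exp_add]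
    congr 1
    push_cast
    ring
  · rw [insert_inter_of_notMem hxA, erase_eq_of_notMem hxA, one_mul]

theorem Finset.sum_sum_powersetCard_erase_insert (U : Finset α) (m : ℕ) {M : Type*}
    [AddCommMonoid M] (f : Finset α → M) :
    ∑ x ∈ U, ∑ t ∈ (U.erase x).powersetCard m, f (insert x t) =
      (m + 1) • ∑ t ∈ U.powersetCard (m + 1), f t := by
  have hfiber (x) (hx : x ∈ U) : ∑ t ∈ (U.erase x).powersetCard m, f (insert x t) =
      ∑ t ∈ (U.powersetCard (m + 1)).filter (x ∈ ·), f t := by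
    refine sum_nbij' (insert x) (erase · x) (fun t ht => ?_) (fun t ht => ?_)
      (fun t ht => ?_) (fun t ht => insert_erase (mem_filter.1 ht).2) fun _ _ => rfl
    all_goals simp only [mem_filter, mem_powersetCard] at ht ⊢
    · have hxt : x ∉ t := fun h => by simpa using ht.1 h
      exact ⟨⟨insert_subset hx (ht.1.trans (erase_subset x U)),
        by rw [card_insert_of_notMem hxt, ht.2]⟩, mem_insert_self x t⟩
    · exact ⟨erase_subset_erase x ht.1.1, by rw [card_erase_of_mem ht.2, ht.1.2]; rfl⟩
    · exact erase_insert fun h => by simpa using ht.1 h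
  rw [sum_congr rfl hfiber, sum_comm' (s' := id) (t' := U.powersetCard (m + 1)), smul_sum]
  · refine sum_congr rfl fun t ht => ?_
    rw [id, sum_const, (mem_powersetCard.1 ht).2]
  · intro x t
    simp only [mem_filter, mem_powersetCard, id]
    exact ⟨fun h => ⟨h.2.2, h.2.1⟩, fun h => ⟨h.2.1 h.1, h.2, h.1⟩⟩

theorem mul_sum_exp_card_inter_eq (U A : Finset α) (m : ℕ) (s : ℝ) :
    (m + 1) * ∑ t ∈ U.powersetCard (m + 1), exp (s * #(t ∩ A)) =
      ∑ x ∈ U, (if x ∈ A then exp s else 1) *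
        ∑ t ∈ (U.erase x).powersetCard m, exp (s * #(t ∩ A.erase x)) := by
  rw [← sum_congr rfl fun x _ => sum_exp_card_insert_inter U A x m s,
    sum_sum_powersetCard_erase_insert U m fun t => exp (s * #(t ∩ A)), nsmul_eq_mul]
  push_cast
  ring

theorem sum_exp_card_inter_le (s : ℝ) {d : ℕ} (hd : 0 < d) (m : ℕ) {U A : Finset α}
    (hA : A ⊆ U) (hU : #U = d + m) :
    ∑ t ∈ U.powersetCard m, exp (s * #(t ∩ A)) ≤
      (d + m).choose m * exp (s * m * #A / (d + m) + s ^ 2 * samplingProxy d m) := by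
  induction m generalizing U A with
  | zero => simp [samplingProxy_zero]
  | succ m ih =>
    set k : ℝ := (#A : ℝ)
    set C : ℝ := (d + m).choose m * exp (s ^ 2 * samplingProxy d m)
    have hfiber (x) (hx : x ∈ U) :
        (if x ∈ A then exp s else 1) *
          ∑ t ∈ (U.erase x).powersetCard m, exp (s * #(t ∩ A.erase x)) ≤
        C * if x ∈ A then exp (s + s * m * (k - 1) / (d + m)) else exp (s * m * k / (d + m)) := by
      have hIH := ih (erase_subset_erase x hA) (by rw [card_erase_of_mem hx, hU]; rfl)
      split_ifs with hxA
      · rw [card_erase_of_mem hxA, Nat.cast_pred (card_pos.2 ⟨x, hxA⟩)] at hIH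
        calc _ ≤ exp s * ((d + m).choose m *
              exp (s * m * (k - 1) / (d + m) + s ^ 2 * samplingProxy d m)) := by gcongr
          _ = _ := by simp only [C, exp_add]; ring
      · rw [erase_eq_of_notMem hxA] at hIH ⊢
        calc _ ≤ 1 * ((d + m).choose m *
              exp (s * m * k / (d + m) + s ^ 2 * samplingProxy d m)) := by gcongr
          _ = _ := by simp only [C, exp_add]; ring
    have hUcast : (#U : ℝ) = d + m + 1 := by simp [hU]; ring
    have hchoose :
        ((d + m).choose m : ℝ) * (d + m + 1) = (m + 1) * (d + (m + 1)).choose (m + 1) := by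
      exact_mod_cast (mul_comm _ _).trans
        ((Nat.add_one_mul_choose_eq (d + m) m).trans (mul_comm _ _))
    refine le_of_mul_le_mul_left ?_ (by positivity : (0 : ℝ) < m + 1)
    calc _ = _ := mul_sum_exp_card_inter_eq U A m s
      _ ≤ ∑ x ∈ U, C *
            if x ∈ A then exp (s + s * m * (k - 1) / (d + m)) else exp (s * m * k / (d + m)) :=
          sum_le_sum hfiber
      _ = C * (k * exp (s + s * m * (k - 1) / (d + m)) +
            (d + m + 1 - k) * exp (s * m * k / (d + m))) := by
          rw [← mul_sum, sum_ite_mem_of_subset hA, hUcast]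
      _ ≤ C * ((d + m + 1) *
            exp (s * (m + 1) * k / (d + m + 1) + s ^ 2 * (d / (d + m)) ^ 2 / 8)) := by
          gcongr
          refine mul_exp_add_sub_mul_exp_le (by positivity) (by positivity) ?_
          rw [← hUcast]
          exact Nat.cast_le.2 (card_le_card hA)
      _ = (m + 1) * ((d + (m + 1)).choose (m + 1) *
            exp (s * (m + 1 : ℕ) * #A / (d + (m + 1 : ℕ)) + s ^ 2 * samplingProxy d (m + 1))) := by
          rw [samplingProxy_succ, ← mul_assoc ((m : ℝ) + 1), ← hchoose]
          simp only [C, k, mul_add, exp_add]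
          push_cast
          ring_nf

theorem card_filter_mean_add_le_card_inter_le {d m : ℕ} (hd : 0 < d) (hm : 0 < m)
    {U A : Finset α} (hA : A ⊆ U) (hU : #U = d + m) {a : ℝ} (ha : 0 ≤ a) :
    (#((U.powersetCard m).filter fun t => m * #A / (d + m) + a ≤ (#(t ∩ A) : ℝ)) : ℝ) ≤
      (d + m).choose m * exp (-a ^ 2 / (4 * samplingProxy d m)) := by
  set c := samplingProxy d m
  have hc : 0 < c := samplingProxy_pos hd hm
  -- Chernoff's bound with the optimal parameter `s = a / (2 c)`
  set s := a / (2 * c)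
  calc _ ≤ exp (-(s * (m * #A / (d + m) + a))) * ∑ t ∈ U.powersetCard m, exp (s * #(t ∩ A)) :=
        card_filter_le_exp_mul_sum_exp _ _ _ (by positivity)
    _ ≤ exp (-(s * (m * #A / (d + m) + a))) *
          ((d + m).choose m * exp (s * m * #A / (d + m) + s ^ 2 * c)) := by
        gcongr
        exact sum_exp_card_inter_le s hd m hA hU
    _ = (d + m).choose m * exp (-a ^ 2 / (4 * c)) := by
        rw [mul_left_comm, ← exp_add]
        congr 2
        simp only [s]
        field_simp
        ring

end

theorem mul_div_le_sq_div_samplingProxy {d m : ℕ} (hm : 0 < m) (hmd : m < d) (δ : ℝ) :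
    δ ^ 2 * m * (d + m) / (d + m + 2) ≤ (δ * m * d / (d + m)) ^ 2 / (4 * samplingProxy d m) := by
  have hm' : (1 : ℝ) ≤ m := by exact_mod_cast hm
  have hmd' : (m : ℝ) + 1 ≤ d := by exact_mod_cast hmd
  have hc := samplingProxy_pos (hm.trans hmd) hm
  set N : ℝ := d + m
  have hN : 0 < N := by positivity
  set B : ℝ := d ^ 2 * m / (2 * ((2 * d - 1) * (2 * N - 1)))
  have hcube : 2 * N ^ 3 ≤ (2 * d - 1) * ((2 * N - 1) * (N + 2)) := by
    have h1 : N ≤ 2 * d - 1 := by simp only [N]; linarith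
    have h2 : 2 * N ^ 2 ≤ (2 * N - 1) * (N + 2) := by simp only [N]; nlinarith
    calc 2 * N ^ 3 = N * (2 * N ^ 2) := by ring
      _ ≤ _ := mul_le_mul h1 h2 (by positivity) (by linarith)
  calc δ ^ 2 * m * N / (N + 2) ≤ δ ^ 2 * m * ((2 * d - 1) * (2 * N - 1)) / (2 * N ^ 2) := by
        rw [div_le_div_iff₀ (by positivity) (by positivity)]
        have := mul_le_mul_of_nonneg_left hcube (by positivity : 0 ≤ δ ^ 2 * m)
        linarith
    _ = (δ * m * d / N) ^ 2 / (4 * B) := by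
        simp only [B]
        field_simp [show 2 * (d : ℝ) - 1 ≠ 0 by linarith, show 2 * N - 1 ≠ 0 by linarith,
          show (d : ℝ) ≠ 0 by linarith, hN.ne']
        ring
    _ ≤ (δ * m * d / N) ^ 2 / (4 * samplingProxy d m) := by
        gcongr
        exact (samplingProxy_le (hm.trans hmd) m).trans_eq (by simp only [B, N]; ring)

theorem relWtOn_sub_relWtOn_compl {N m : ℕ} (q : Fin N → Bool) {t : Finset (Fin N)}
    (ht : #t = m) (hm : 0 < m) (hmN : m < N) :
    relWtOn q t - relWtOn q tᶜ =
      (#(t.filter (q · = true)) - m * #(univ.filter (q · = true)) / N) / (m * (N - m) / N) := by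
  have hsplit : #(t.filter (q · = true)) + #(tᶜ.filter (q · = true)) =
      #(univ.filter (q · = true)) := by
    rw [← card_union_of_disjoint (disjoint_filter_filter disjoint_compl_right), ← filter_union,
      union_compl]
  have hcompl : (#tᶜ : ℝ) = N - m := by
    rw [card_compl, Fintype.card_fin, ht, Nat.cast_sub hmN.le]
  have hm' : (0 : ℝ) < m := by exact_mod_cast hm
  have hmN' : (m : ℝ) < N := by exact_mod_cast hmN
  rw [relWtOn, relWtOn, hcompl, ht, ← hsplit]
  push_cast
  field_simp [(sub_pos.2 hmN').ne', (hm'.trans hmN').ne']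
  ring

theorem relWtOn_not {N : ℕ} (q : Fin N → Bool) {t : Finset (Fin N)} (ht : t.Nonempty) :
    relWtOn (fun i => !q i) t = 1 - relWtOn q t := by
  have hsplit := card_filter_add_card_filter_not (s := t) (q · = true)
  simp only [Bool.not_eq_true] at hsplit
  have : (0 : ℝ) < #t := by exact_mod_cast ht.card_pos
  rw [relWtOn, relWtOn, eq_sub_iff_add_eq, ← add_div, div_eq_one_iff_eq this.ne']
  simp only [Bool.not_eq_eq_eq_not, Bool.not_true]
  exact_mod_cast (add_comm _ _).trans hsplit

theorem card_relWtOn_sub_gt_le {N m : ℕ} (hm : 0 < m) (hmN : 2 * m < N) {δ : ℝ} (hδ : 0 ≤ δ)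
    (q : Fin N → Bool) :
    (#(univ.filter fun t : Finset (Fin N) => #t = m ∧ δ < relWtOn q t - relWtOn q tᶜ) : ℝ) ≤
      N.choose m * exp (-(δ ^ 2 * m * N) / (N + 2)) := by
  obtain ⟨d, rfl⟩ : ∃ d, N = d + m := ⟨N - m, by omega⟩
  have hmd : m < d := by omega
  have hm' : (0 : ℝ) < m := by exact_mod_cast hm
  have hd' : (0 : ℝ) < d := by exact_mod_cast hm.trans hmd
  set A := univ.filter (q · = true)
  have hsub :
      univ.filter (fun t : Finset (Fin (d + m)) => #t = m ∧ δ < relWtOn q t - relWtOn q tᶜ) ⊆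
        (univ.powersetCard m).filter fun t =>
          m * #A / (d + m) + δ * m * d / (d + m) ≤ (#(t ∩ A) : ℝ) := by
    intro t ht
    obtain ⟨htm, hgt⟩ := (mem_filter.1 ht).2
    refine mem_filter.2 ⟨mem_powersetCard_univ.2 htm, ?_⟩
    rw [relWtOn_sub_relWtOn_compl q htm hm (by omega),
      lt_div_iff₀ (by push_cast; rw [add_sub_cancel_right]; positivity)] at hgt
    rw [inter_filter, inter_univ]
    push_cast at hgt ⊢
    have : δ * m * d / (d + m) = δ * (m * (d + m - m) / (d + m)) := by ring
    linarith
  calc _ ≤ _ := Nat.cast_le.2 (card_le_card hsub)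
    _ ≤ (d + m).choose m * exp (-(δ * m * d / (d + m)) ^ 2 / (4 * samplingProxy d m)) := by
        simpa using card_filter_mean_add_le_card_inter_le (hm.trans hmd) hm (subset_univ A)
          (by simp) (by positivity : 0 ≤ δ * m * d / (d + m))
    _ ≤ _ := by
        push_cast
        gcongr _ * exp ?_
        rw [neg_div, neg_div, neg_le_neg_iff]
        exact mul_div_le_sq_div_samplingProxy hm hmd δ

/-- Bouman–Fehr classical sampling bound: for a uniformly random size-`m` subset `t`
of `{1,…,N}` with `m < N/2` and any fixed `q ∈ {0,1}^N`,
`Pr(|w(q_t) − w(q_{−t})| > δ) ≤ 2 exp(−δ² m N/(N+2))`. -/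
theorem stmt_6 (N m : ℕ) (hm : 0 < m) (hmN : 2 * m < N) (δ : ℝ) (hδ : 0 ≤ δ)
    (q : Fin N → Bool) :
    ((Finset.univ.filter fun t : Finset (Fin N) =>
        t.card = m ∧ δ < |relWtOn q t - relWtOn q tᶜ|).card : ℝ) / (N.choose m) ≤
      2 * Real.exp (-(δ ^ 2 * m * N) / (N + 2)) := by
  set D : (Fin N → Bool) → Finset (Fin N) → ℝ := fun q t => relWtOn q t - relWtOn q tᶜ
  have hD_not {t : Finset (Fin N)} (ht : #t = m) : D (fun i => !q i) t = -D q t := by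
    have htc : tᶜ.Nonempty := card_pos.1 (by simp [card_compl, ht]; omega)
    simp only [D]
    rw [relWtOn_not q (card_pos.1 (by omega)), relWtOn_not q htc]
    ring
  have hsplit : univ.filter (fun t => #t = m ∧ δ < |D q t|) ⊆
      univ.filter (fun t => #t = m ∧ δ < D q t) ∪
        univ.filter (fun t => #t = m ∧ δ < D (fun i => !q i) t) := by
    intro t ht
    simp only [mem_filter, mem_univ, true_and, mem_union] at ht ⊢
    rw [hD_not ht.1]
    rcases lt_abs.1 ht.2 with h | h
    exacts [.inl ⟨ht.1, h⟩, .inr ⟨ht.1, h⟩]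
  rw [div_le_iff₀ (Nat.cast_pos.2 (Nat.choose_pos (by omega)))]
  have hcard := Nat.cast_le (α := ℝ) |>.2 <| (card_le_card hsplit).trans (card_union_le _ _)
  push_cast at hcard
  linarith [card_relWtOn_sub_gt_le hm hmN hδ q, card_relWtOn_sub_gt_le hm hmN hδ fun i => !q i]
end

section
/- Let |ψ⟩_{AE} = Σ_{q ∈ J} α_q |q⟩^M |E_q⟩ with J ⊆ A_d^n a subset of basis-M words, and let σ = Σ_{q∈J} |α_q|² |q⟩⟨q|^M ⊗ |E_q⟩⟨E_q|. If the A system is measured in another basis N yielding ρ_{A_N E} (from the pure state) and σ_{A_N E} (from the mixed state), then H_∞(A_N|E)_ρ ≥ H_∞(A_N|E)_σ − log₂|J|. -/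
open Kronecker
open scoped ComplexOrder

/-- Renner's conditional quantum min-entropy `H_∞(A|E)_ρ`. -/
noncomputable def condMinEntropy {A E : Type*} [Fintype A] [Fintype E]
    [DecidableEq A] [DecidableEq E] (ρ : Matrix (A × E) (A × E) ℂ) : ℝ :=
  sSup {lam : ℝ | ∃ σ : Matrix E E ℂ, σ.PosSemidef ∧ σ.trace = 1 ∧
    (((2 : ℝ) ^ (-lam)) • ((1 : Matrix A A ℂ) ⊗ₖ σ) - ρ).PosSemidef}

/-!
Write `w_{x,q} = ⟨N_x|M_q⟩ α_q |E_q⟩`. The `x`-block of `ρ_{A_N E}` is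
`|Σ_q w_{x,q}⟩⟨Σ_q w_{x,q}|` and that of `σ_{A_N E}` is `Σ_q |w_{x,q}⟩⟨w_{x,q}|`, so the operator
Cauchy–Schwarz inequality gives `ρ_{A_N E} ≤ |J| σ_{A_N E}`. Hence every `λ` with
`σ_{A_N E} ≤ 2^{-λ} 𝟙 ⊗ τ` yields `ρ_{A_N E} ≤ 2^{-(λ - log₂|J|)} 𝟙 ⊗ τ`. Passing to suprema needs
the feasible set of `ρ_{A_N E}` to be bounded, which holds because its trace is one (the overlap
matrix `⟨N_x|M_q⟩` is unitary), and that of `σ_{A_N E}` to be nonempty: since `|⟨N_x|M_q⟩| ≤ 1`,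
`τ = Σ_q |α_q|² |E_q⟩⟨E_q|` is feasible at `λ = 0`.
-/

open Matrix Finset
open scoped MatrixOrder

section CondMinEntropy

variable {A E : Type*} [Fintype A] [Fintype E] [DecidableEq A]

def condMinEntropySet (ρ : Matrix (A × E) (A × E) ℂ) : Set ℝ :=
  {lam | ∃ τ : Matrix E E ℂ, τ.PosSemidef ∧ τ.trace = 1 ∧ ρ ≤ (2 : ℝ) ^ (-lam) • (1 ⊗ₖ τ)}

theorem condMinEntropy_eq_sSup [DecidableEq E] (ρ : Matrix (A × E) (A × E) ℂ) :
    condMinEntropy ρ = sSup (condMinEntropySet ρ) := rfl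

theorem le_logb_card_of_mem_condMinEntropySet {ρ : Matrix (A × E) (A × E) ℂ}
    (hρ : ρ.trace = 1) {lam : ℝ} (hlam : lam ∈ condMinEntropySet ρ) :
    lam ≤ Real.logb 2 (Fintype.card A) := by
  obtain ⟨τ, -, hτ, hρτ⟩ := hlam
  have htrace := (le_iff.mp hρτ).trace_nonneg
  rw [trace_sub, trace_smul, trace_kronecker, trace_one, hτ, hρ, mul_one] at htrace
  have hcard : 1 ≤ (2 : ℝ) ^ (-lam) * Fintype.card A := by
    rw [← sub_nonneg, ← Complex.zero_le_real]
    simpa [Complex.real_smul] using htrace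
  have hpos : (0 : ℝ) < 2 ^ lam := by positivity
  rw [Real.rpow_neg zero_le_two, ← div_eq_inv_mul, one_le_div hpos] at hcard
  exact (Real.le_logb_iff_rpow_le one_lt_two (hpos.trans_le hcard)).mpr hcard

theorem sub_logb_mem_condMinEntropySet {ρ σ : Matrix (A × E) (A × E) ℂ} {k : ℝ} (hk : 0 < k)
    (hρσ : ρ ≤ k • σ) {lam : ℝ} (hlam : lam ∈ condMinEntropySet σ) :
    lam - Real.logb 2 k ∈ condMinEntropySet ρ := by
  obtain ⟨τ, hτ, htr, hστ⟩ := hlam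
  refine ⟨τ, hτ, htr, hρσ.trans ?_⟩
  rw [neg_sub, sub_eq_add_neg, Real.rpow_add two_pos, Real.rpow_logb two_pos one_lt_two.ne' hk,
    mul_smul]
  exact smul_le_smul_of_nonneg_left hστ hk.le

theorem condMinEntropy_sub_logb_le [DecidableEq E] {ρ σ : Matrix (A × E) (A × E) ℂ} {k : ℝ}
    (hk : 0 < k) (hρσ : ρ ≤ k • σ) (hσ : (condMinEntropySet σ).Nonempty) (hρ : ρ.trace = 1) :
    condMinEntropy σ - Real.logb 2 k ≤ condMinEntropy ρ := by
  have hbdd : BddAbove (condMinEntropySet ρ) :=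
    ⟨_, fun _ => le_logb_card_of_mem_condMinEntropySet hρ⟩
  rw [sub_le_iff_le_add, condMinEntropy_eq_sSup, condMinEntropy_eq_sSup]
  refine csSup_le hσ fun lam hlam => ?_
  rw [← sub_le_iff_le_add]
  exact le_csSup hbdd (sub_logb_mem_condMinEntropySet hk hρσ hlam)

end CondMinEntropy

section ClassicalQuantum

variable {𝕜 A E : Type*} [RCLike 𝕜] [DecidableEq A]

def cqMatrix (f : A → Matrix E E 𝕜) : Matrix (A × E) (A × E) 𝕜 :=
  fun u v => if u.1 = v.1 then f u.1 u.2 v.2 else 0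

theorem cqMatrix_sub (f g : A → Matrix E E 𝕜) :
    cqMatrix (fun x => f x - g x) = cqMatrix f - cqMatrix g := by
  ext u v
  by_cases h : u.1 = v.1 <;> simp [cqMatrix, h]

theorem cqMatrix_smul (r : ℝ) (f : A → Matrix E E 𝕜) :
    cqMatrix (fun x => r • f x) = r • cqMatrix f := by
  ext u v
  by_cases h : u.1 = v.1 <;> simp [cqMatrix, h]

theorem one_kronecker_eq_cqMatrix (τ : Matrix E E 𝕜) :
    (1 : Matrix A A 𝕜) ⊗ₖ τ = cqMatrix fun _ => τ := by
  ext ⟨a, e⟩ ⟨b, e'⟩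
  by_cases h : a = b <;> simp [cqMatrix, one_apply, h]

variable [Fintype A]

theorem cqMatrix_eq_sum_kronecker (f : A → Matrix E E 𝕜) :
    cqMatrix f = ∑ x, single x x 1 ⊗ₖ f x := by
  ext ⟨a, e⟩ ⟨b, e'⟩
  by_cases h : a = b
  · simp [cqMatrix, Matrix.sum_apply, single_apply, h]
  · simp only [cqMatrix, Matrix.sum_apply, kroneckerMap_apply, single_apply, if_neg h]
    refine (sum_eq_zero fun c _ => ?_).symm
    rw [if_neg fun hc => h (hc.1.symm.trans hc.2), zero_mul]

theorem trace_cqMatrix [Fintype E] (f : A → Matrix E E 𝕜) :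
    (cqMatrix f).trace = ∑ x, (f x).trace := by
  simp [trace, cqMatrix, Fintype.sum_prod_type]

theorem posSemidef_cqMatrix [Fintype E] {f : A → Matrix E E 𝕜} (hf : ∀ x, (f x).PosSemidef) :
    (cqMatrix f).PosSemidef := by
  rw [cqMatrix_eq_sum_kronecker]
  refine posSemidef_sum _ fun x _ => ?_
  rw [← diagonal_single]
  exact (PosSemidef.diagonal (Pi.single_nonneg.mpr zero_le_one)).kronecker (hf x)

theorem cqMatrix_mono [Fintype E] {f g : A → Matrix E E 𝕜} (h : ∀ x, f x ≤ g x) :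
    cqMatrix f ≤ cqMatrix g := by
  rw [le_iff, ← cqMatrix_sub]
  exact posSemidef_cqMatrix h

end ClassicalQuantum

section RankOne

variable {𝕜 E : Type*} [RCLike 𝕜]

theorem vecMulVec_smul_self_star (c : 𝕜) (v : E → 𝕜) :
    vecMulVec (c • v) (star (c • v)) = (‖c‖ ^ 2 : ℝ) • vecMulVec v (star v) := by
  ext e e'
  simp only [star_smul, RCLike.star_def, vecMulVec_apply, Pi.smul_apply, smul_eq_mul,
    Pi.star_apply, Matrix.smul_apply, RCLike.real_smul_eq_coe_mul, map_pow, ← RCLike.mul_conj]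
  ring

variable [Fintype E]

theorem star_dotProduct_self (v : E → 𝕜) : star v ⬝ᵥ v = ((∑ e, ‖v e‖ ^ 2 : ℝ) : 𝕜) := by
  simp [dotProduct, RCLike.conj_mul]

theorem trace_vecMulVec_self_star (v : E → 𝕜) :
    (vecMulVec v (star v)).trace = ((∑ e, ‖v e‖ ^ 2 : ℝ) : 𝕜) := by
  rw [trace_vecMulVec, dotProduct_comm, star_dotProduct_self]

theorem star_dotProduct_vecMulVec_self_star_mulVec (v y : E → 𝕜) :
    star y ⬝ᵥ vecMulVec v (star v) *ᵥ y = ((‖star y ⬝ᵥ v‖ ^ 2 : ℝ) : 𝕜) := by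
  rw [vecMulVec_mulVec, op_smul_eq_smul, dotProduct_smul, smul_eq_mul, star_dotProduct,
    RCLike.star_def, RCLike.conj_mul, RCLike.ofReal_pow]

theorem vecMulVec_sum_self_star_le {ι : Type*} (s : Finset ι) (v : ι → E → 𝕜) :
    vecMulVec (∑ i ∈ s, v i) (star (∑ i ∈ s, v i)) ≤
      (#s : ℝ) • ∑ i ∈ s, vecMulVec (v i) (star (v i)) := by
  have hsum : (∑ i ∈ s, vecMulVec (v i) (star (v i))).PosSemidef :=
    posSemidef_sum _ fun i _ => posSemidef_vecMulVec_self_star (v i)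
  refine PosSemidef.of_dotProduct_mulVec_nonneg
    ((hsum.smul (Nat.cast_nonneg _)).isHermitian.sub
      (posSemidef_vecMulVec_self_star _).isHermitian) fun y => ?_
  have hcs : ‖∑ i ∈ s, star y ⬝ᵥ v i‖ ^ 2 ≤ #s * ∑ i ∈ s, ‖star y ⬝ᵥ v i‖ ^ 2 :=
    (pow_le_pow_left₀ (norm_nonneg _) (norm_sum_le _ _) 2).trans sq_sum_le_card_mul_sum_sq
  rw [sub_mulVec, dotProduct_sub, smul_mulVec, dotProduct_smul, sum_mulVec, dotProduct_sum]
  simp only [star_dotProduct_vecMulVec_self_star_mulVec, dotProduct_sum]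
  rw [← RCLike.ofReal_sum, RCLike.real_smul_eq_coe_mul,
    ← RCLike.ofReal_mul, ← RCLike.ofReal_sub, RCLike.ofReal_nonneg]
  linarith

end RankOne

section Unitary

variable {𝕜 A : Type*} [RCLike 𝕜] [Fintype A] [DecidableEq A]

theorem map_star_mem_unitaryGroup_of_orthonormal {U : Matrix A A 𝕜}
    (hU : ∀ a b, ∑ s, starRingEnd 𝕜 (U a s) * U b s = if a = b then 1 else 0) :
    U.map star ∈ unitaryGroup A 𝕜 := by
  rw [mem_unitaryGroup_iff, star_eq_conjTranspose]
  ext a b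
  simp [mul_apply, one_apply, hU]

theorem sum_norm_sq_mulVec_of_mem_unitaryGroup {U : Matrix A A 𝕜}
    (hU : U ∈ unitaryGroup A 𝕜) (c : A → 𝕜) :
    ∑ x, ‖(U *ᵥ c) x‖ ^ 2 = ∑ q, ‖c q‖ ^ 2 := by
  have h : star (U *ᵥ c) ⬝ᵥ U *ᵥ c = star c ⬝ᵥ c := by
    rw [star_mulVec, ← dotProduct_mulVec, mulVec_mulVec, ← star_eq_conjTranspose,
      mem_unitaryGroup_iff'.mp hU, one_mulVec]
  rwa [star_dotProduct_self, star_dotProduct_self, RCLike.ofReal_inj] at h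

theorem sum_norm_sq_sum_mul_of_mem_unitaryGroup {E : Type*} [Fintype E] {U : Matrix A A 𝕜}
    (hU : U ∈ unitaryGroup A 𝕜) (s : Finset A) (v : A → E → 𝕜) :
    ∑ x, ∑ e, ‖∑ q ∈ s, U x q * v q e‖ ^ 2 = ∑ q ∈ s, ∑ e, ‖v q e‖ ^ 2 := by
  rw [sum_comm, sum_comm (s := s)]
  refine sum_congr rfl fun e _ => ?_
  simpa [mulVec, dotProduct, mul_ite, apply_ite, sum_ite_mem_eq] using
    sum_norm_sq_mulVec_of_mem_unitaryGroup hU fun q => if q ∈ s then v q e else 0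

end Unitary

section Superposition

variable {A E : Type*} [Fintype A] [DecidableEq A] [Fintype E]

/- With `W x q = ⟨N_x|M_q⟩` and `v q = α_q |E_q⟩`, these are `ρ_{A_N E}` and `σ_{A_N E}`. -/
noncomputable def measuredSuperposition (W : Matrix A A ℂ) (J : Finset A) (v : A → E → ℂ) :
    Matrix (A × E) (A × E) ℂ :=
  cqMatrix fun x => vecMulVec (∑ q ∈ J, W x q • v q) (star (∑ q ∈ J, W x q • v q))

noncomputable def measuredMixture (W : Matrix A A ℂ) (J : Finset A) (v : A → E → ℂ) :
    Matrix (A × E) (A × E) ℂ :=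
  cqMatrix fun x => ∑ q ∈ J, vecMulVec (W x q • v q) (star (W x q • v q))

theorem measuredSuperposition_le_card_smul_measuredMixture (W : Matrix A A ℂ) (J : Finset A)
    (v : A → E → ℂ) : measuredSuperposition W J v ≤ (#J : ℝ) • measuredMixture W J v :=
  (cqMatrix_mono fun _ => vecMulVec_sum_self_star_le J _).trans_eq (cqMatrix_smul _ _)

variable {W : Matrix A A ℂ} {J : Finset A} {v : A → E → ℂ}

theorem trace_measuredSuperposition (hW : W ∈ unitaryGroup A ℂ)
    (hv : ∑ q ∈ J, ∑ e, ‖v q e‖ ^ 2 = 1) : (measuredSuperposition W J v).trace = 1 := by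
  rw [measuredSuperposition, trace_cqMatrix]
  simp_rw [trace_vecMulVec_self_star, Finset.sum_apply, Pi.smul_apply, smul_eq_mul]
  rw [← RCLike.ofReal_sum, sum_norm_sq_sum_mul_of_mem_unitaryGroup hW, hv, RCLike.ofReal_one]

theorem zero_mem_condMinEntropySet_measuredMixture (hW : W ∈ unitaryGroup A ℂ)
    (hv : ∑ q ∈ J, ∑ e, ‖v q e‖ ^ 2 = 1) : 0 ∈ condMinEntropySet (measuredMixture W J v) := by
  set τ : Matrix E E ℂ := ∑ q ∈ J, vecMulVec (v q) (star (v q))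
  have hτ_trace : τ.trace = 1 := by
    simp_rw [τ, trace_sum, trace_vecMulVec_self_star]
    rw [← RCLike.ofReal_sum, hv, RCLike.ofReal_one]
  refine ⟨τ, posSemidef_sum _ fun q _ => posSemidef_vecMulVec_self_star (v q), hτ_trace, ?_⟩
  rw [neg_zero, Real.rpow_zero, one_smul, one_kronecker_eq_cqMatrix]
  refine cqMatrix_mono fun x => sum_le_sum fun q _ => ?_
  rw [vecMulVec_smul_self_star]
  refine (smul_le_smul_of_nonneg_right ?_ (posSemidef_vecMulVec_self_star _).nonneg).trans_eq
    (one_smul ℝ _)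
  exact pow_le_one₀ (norm_nonneg _) (entry_norm_bound_of_unitary hW x q)

theorem condMinEntropy_measuredMixture_sub_logb_le [DecidableEq E] (hW : W ∈ unitaryGroup A ℂ)
    (hv : ∑ q ∈ J, ∑ e, ‖v q e‖ ^ 2 = 1) :
    condMinEntropy (measuredMixture W J v) - Real.logb 2 #J ≤
      condMinEntropy (measuredSuperposition W J v) := by
  have hJ : (0 : ℝ) < #J := by
    exact_mod_cast card_pos.mpr (nonempty_of_sum_ne_zero (hv ▸ one_ne_zero))
  refine condMinEntropy_sub_logb_le hJ (measuredSuperposition_le_card_smul_measuredMixture W J v)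
    ⟨0, zero_mem_condMinEntropySet_measuredMixture hW hv⟩ (trace_measuredSuperposition hW hv)

end Superposition

theorem stmt_9_general (n d : ℕ) {E : Type*} [Fintype E] [DecidableEq E]
    (Mb Nb : (Fin n → Fin d) → (Fin n → Fin d) → ℂ)
    (hM : ∀ a b, (∑ s, (starRingEnd ℂ) (Mb a s) * Mb b s) = if a = b then 1 else 0)
    (hN : ∀ a b, (∑ s, (starRingEnd ℂ) (Nb a s) * Nb b s) = if a = b then 1 else 0)
    (J : Finset (Fin n → Fin d))
    (α : (Fin n → Fin d) → ℂ) (hα : ∑ q ∈ J, ‖α q‖ ^ 2 = 1)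
    (Evec : (Fin n → Fin d) → E → ℂ) (hE : ∀ q ∈ J, ∑ e, ‖Evec q e‖ ^ 2 = 1) :
    condMinEntropy (A := Fin n → Fin d) (E := E)
        (fun u v => if u.1 = v.1 then
          (∑ a, (starRingEnd ℂ) (Nb u.1 a) * ∑ q ∈ J, α q * Mb q a * Evec q u.2) *
            (starRingEnd ℂ)
              (∑ a, (starRingEnd ℂ) (Nb u.1 a) * ∑ q ∈ J, α q * Mb q a * Evec q v.2)
          else 0) ≥
      condMinEntropy (A := Fin n → Fin d) (E := E)
        (fun u v => if u.1 = v.1 then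
          ∑ q ∈ J, (‖α q‖ ^ 2 : ℂ) * (‖∑ a, (starRingEnd ℂ) (Nb u.1 a) * Mb q a‖ ^ 2 : ℂ)
            * Evec q u.2 * (starRingEnd ℂ) (Evec q v.2)
          else 0) - Real.logb 2 J.card := by
  set W : Matrix (Fin n → Fin d) (Fin n → Fin d) ℂ := (of Nb).map star * ((of Mb).map star)ᴴ
  have hW : W ∈ unitaryGroup _ ℂ := mul_mem (map_star_mem_unitaryGroup_of_orthonormal hN)
    (Unitary.star_mem (map_star_mem_unitaryGroup_of_orthonormal hM))
  have hW_apply : ∀ x q, W x q = ∑ a, starRingEnd ℂ (Nb x a) * Mb q a := by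
    simp [W, mul_apply]
  set v : (Fin n → Fin d) → E → ℂ := fun q => α q • Evec q
  have hv : ∑ q ∈ J, ∑ e, ‖v q e‖ ^ 2 = 1 := by
    simp only [v, Pi.smul_apply, smul_eq_mul, norm_mul, mul_pow, ← mul_sum]
    rw [sum_congr rfl fun q hq => by rw [hE q hq, mul_one], hα]
  have hψ : ∀ x e, ∑ a, starRingEnd ℂ (Nb x a) * ∑ q ∈ J, α q * Mb q a * Evec q e =
      (∑ q ∈ J, W x q • v q) e := fun x e => by
    simp only [Finset.sum_apply, Pi.smul_apply, smul_eq_mul, v, hW_apply, mul_sum, sum_mul]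
    rw [sum_comm]
    exact sum_congr rfl fun q _ => sum_congr rfl fun a _ => by ring
  convert condMinEntropy_measuredMixture_sub_logb_le hW hv using 4 <;> congr 1 <;>
    ext ⟨x, e⟩ ⟨y, e'⟩ <;> simp only [measuredSuperposition, measuredMixture, cqMatrix] <;> congr 1
  · rw [hψ, hψ]
    rfl
  · rw [Matrix.sum_apply]
    refine sum_congr rfl fun q _ => ?_
    simp only [← Complex.mul_conj', ← hW_apply, star_smul, RCLike.star_def, vecMulVec_apply,
      Pi.smul_apply, smul_eq_mul, Pi.star_apply, v]
    ring

/-- Bouman–Fehr superposition lemma.  Let `|ψ⟩ = Σ_{q∈J} α_q |q⟩^M |E_q⟩` and let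
`σ = Σ_{q∈J} |α_q|² |q⟩⟨q|^M ⊗ |E_q⟩⟨E_q|` be the corresponding mixture.  Measuring the
`A` system in another orthonormal basis `Nb` gives cq-states `ρ_{A_N E}` and
`σ_{A_N E}`, and `H_∞(A_N|E)_ρ ≥ H_∞(A_N|E)_σ − log₂|J|`. -/
theorem stmt_9 (n d : ℕ) {E : Type*} [Fintype E] [DecidableEq E]
    (Mb Nb : (Fin n → Fin d) → (Fin n → Fin d) → ℂ)
    (hM : ∀ a b, (∑ s, (starRingEnd ℂ) (Mb a s) * Mb b s) = if a = b then 1 else 0)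
    (hN : ∀ a b, (∑ s, (starRingEnd ℂ) (Nb a s) * Nb b s) = if a = b then 1 else 0)
    (J : Finset (Fin n → Fin d)) (hJ : J.Nonempty)
    (α : (Fin n → Fin d) → ℂ) (hα : ∑ q ∈ J, ‖α q‖ ^ 2 = 1)
    (Evec : (Fin n → Fin d) → E → ℂ) (hE : ∀ q ∈ J, ∑ e, ‖Evec q e‖ ^ 2 = 1) :
    condMinEntropy (A := Fin n → Fin d) (E := E)
        (fun u v => if u.1 = v.1 then
          (∑ a, (starRingEnd ℂ) (Nb u.1 a) * ∑ q ∈ J, α q * Mb q a * Evec q u.2) *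
            (starRingEnd ℂ)
              (∑ a, (starRingEnd ℂ) (Nb u.1 a) * ∑ q ∈ J, α q * Mb q a * Evec q v.2)
          else 0) ≥
      condMinEntropy (A := Fin n → Fin d) (E := E)
        (fun u v => if u.1 = v.1 then
          ∑ q ∈ J, (‖α q‖ ^ 2 : ℂ) * (‖∑ a, (starRingEnd ℂ) (Nb u.1 a) * Mb q a‖ ^ 2 : ℂ)
            * Evec q u.2 * (starRingEnd ℂ) (Evec q v.2)
          else 0) - Real.logb 2 J.card :=
  stmt_9_general n d Mb Nb hM hN J α hα Evec hE
end

section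
/- Let |ψ⟩ = Σ_{x ∈ B_p^n} Σ_{y ∈ J} |g^{p+1}(x;y)⟩ |E_{x,y}⟩ be a (normalized) state with J ⊆ {0,1}^n, where the |E_{x,y}⟩ are subnormalized ancilla vectors. If the first qubit of each of the n GHZ registers is measured in the computational (Z) basis and the remaining p qubits of each register are discarded, producing the cq-state ρ_{ZE}, then H_∞(Z|E)_ρ ≥ n − log₂|J|. -/
/-!
In the GHZ register `i`, observing `zᵢ` on the first qubit and `rᵢ` on the other `p` qubits
determines `xᵢ = rᵢ ⊕ zᵢ` and contributes the phase `(-1)^(zᵢ yᵢ)`. Hence, after discarding the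
`r`-qubits, the (unnormalised) state of `E` for outcome `z` is
`ρ_z = 2⁻ⁿ ∑ₓ |∑_{y∈J} (-1)^(z·y) E_{x,y}⟩⟨·|`.
Cauchy–Schwarz over the `|J|` terms gives `ρ_z ≤ |J| 2⁻ⁿ σ` with
`σ = ∑_{x, y} |E_{x,y}⟩⟨E_{x,y}|`, and orthogonality of the characters `z ↦ (-1)^(z·y)` gives
`∑_z ρ_z = σ`, so `σ` is a density matrix and certifies `H_∞(Z|E) ≥ n - log₂ |J|`.
-/

open Kronecker
open scoped ComplexOrder

/-- Amplitudes of the GHZ state `|g^{p+1}(x;y)⟩ = (1/√2)(|0,x⟩ + (−1)^y |1,x̄⟩)`. -/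
noncomputable def ghzAmp (p : ℕ) (x : Fin p → Bool) (y : Bool) :
    (Fin (p + 1) → Bool) → ℂ := fun s =>
  (Real.sqrt 2)⁻¹ *
    ((if s = Fin.cons false x then 1 else 0) +
      (if y then (-1 : ℂ) else 1) * (if s = Fin.cons true (fun i => !x i) then 1 else 0))

open Matrix Finset
open scoped MatrixOrder

section LoewnerOrder

variable {𝕜 ι n : Type*} [RCLike 𝕜]

lemma sum_sum_vecMulVec_sub_star (s : Finset ι) (v : ι → n → 𝕜) :
    ∑ i ∈ s, ∑ j ∈ s, vecMulVec (v i - v j) (star (v i - v j)) =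
      (2 : ℕ) • (#s • ∑ i ∈ s, vecMulVec (v i) (star (v i)) -
        vecMulVec (∑ i ∈ s, v i) (star (∑ i ∈ s, v i))) := by
  ext a b
  simp only [Matrix.sum_apply, vecMulVec_apply, Pi.sub_apply, Pi.star_apply, star_sub,
    Matrix.sub_apply, Matrix.smul_apply, Finset.sum_apply, star_sum, sub_mul, mul_sub,
    sum_sub_distrib, sum_const, Finset.sum_mul_sum, nsmul_eq_mul]
  rw [Finset.sum_comm (s := s) (t := s) (f := fun i j => v j a * star (v i b))]
  push_cast
  simp only [← Finset.mul_sum]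
  ring

lemma vecMulVec_sum_le_card_smul [Fintype n] (s : Finset ι) (v : ι → n → 𝕜) :
    vecMulVec (∑ i ∈ s, v i) (star (∑ i ∈ s, v i)) ≤
      #s • ∑ i ∈ s, vecMulVec (v i) (star (v i)) := by
  have h2 := (posSemidef_sum s fun i _ => posSemidef_sum s fun j _ =>
    posSemidef_vecMulVec_self_star (v i - v j)).smul (show (0 : ℝ) ≤ 2⁻¹ by norm_num)
  rwa [sum_sum_vecMulVec_sub_star, ← Nat.cast_smul_eq_nsmul ℝ, smul_smul,
    Nat.cast_ofNat, inv_mul_cancel₀ two_ne_zero, one_smul] at h2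

end LoewnerOrder

section CQState

variable {𝕜 A E : Type*} [RCLike 𝕜] [Fintype A] [DecidableEq A]

noncomputable def cqState (M : A → Matrix E E 𝕜) : Matrix (A × E) (A × E) 𝕜 :=
  ∑ a, single a a 1 ⊗ₖ M a

lemma cqState_apply (M : A → Matrix E E 𝕜) (u v : A × E) :
    cqState M u v = if u.1 = v.1 then M u.1 u.2 v.2 else 0 := by
  obtain ⟨a, e⟩ := u
  obtain ⟨b, f⟩ := v
  by_cases h : a = b
  · subst h; simp [cqState, Matrix.sum_apply, single_apply]
  · simp only [cqState, Matrix.sum_apply, kronecker_apply, single_apply, h, if_false]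
    exact sum_eq_zero fun c _ => by
      rw [if_neg fun hc : c = a ∧ c = b => h (hc.1 ▸ hc.2), zero_mul]

lemma trace_cqState [Fintype E] (M : A → Matrix E E 𝕜) :
    (cqState M).trace = ∑ a, (M a).trace := by
  simp [cqState, trace_sum, trace_kronecker]

lemma one_kronecker_eq_cqState [DecidableEq E] (σ : Matrix E E 𝕜) :
    (1 : Matrix A A 𝕜) ⊗ₖ σ = cqState fun _ => σ := by
  ext u v
  rw [cqState_apply, kronecker_apply, one_apply]
  split_ifs <;> simp

lemma cqState_sub (M N : A → Matrix E E 𝕜) : cqState N - cqState M = cqState (N - M) := by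
  ext u v
  simp only [Matrix.sub_apply, cqState_apply, Pi.sub_apply]
  split_ifs <;> simp

lemma posSemidef_cqState [Fintype E] {M : A → Matrix E E 𝕜} (hM : ∀ a, (M a).PosSemidef) :
    (cqState M).PosSemidef :=
  posSemidef_sum _ fun a _ =>
    (diagonal_single a (1 : 𝕜) ▸ PosSemidef.diagonal (Pi.single_nonneg.2 zero_le_one)).kronecker
      (hM a)

lemma cqState_le_one_kronecker [Fintype E] [DecidableEq E] {M : A → Matrix E E 𝕜}
    {σ : Matrix E E 𝕜} (h : ∀ a, M a ≤ σ) : cqState M ≤ (1 : Matrix A A 𝕜) ⊗ₖ σ := by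
  rw [one_kronecker_eq_cqState, le_iff, cqState_sub]
  exact posSemidef_cqState h

end CQState

lemma le_condMinEntropy {A E : Type*} [Fintype A] [Fintype E] [DecidableEq A] [DecidableEq E]
    {ρ : Matrix (A × E) (A × E) ℂ} (hρ : ρ.trace = 1) {σ : Matrix E E ℂ} (hσ : σ.PosSemidef)
    (hσ1 : σ.trace = 1) {lam : ℝ} (h : ρ ≤ (2 : ℝ) ^ (-lam) • ((1 : Matrix A A ℂ) ⊗ₖ σ)) :
    lam ≤ condMinEntropy ρ := by
  refine le_csSup ⟨Real.logb 2 (Fintype.card A), ?_⟩ ⟨σ, hσ, hσ1, h⟩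
  -- the junk value of `sSup` is avoided by the bound `lam' ≤ log₂ |A|`, read off from traces
  rintro lam' ⟨σ', -, hσ'1, h'⟩
  have htr := h'.trace_nonneg
  rw [trace_sub, trace_smul, trace_kronecker, trace_one, hσ'1, hρ, mul_one, Complex.real_smul,
    ← Complex.ofReal_natCast, ← Complex.ofReal_mul, ← Complex.ofReal_one, ← Complex.ofReal_sub,
    Complex.zero_le_real, sub_nonneg] at htr
  have hA : (0 : ℝ) < Fintype.card A :=
    pos_of_mul_pos_right (one_pos.trans_le htr) (by positivity)
  rw [Real.le_logb_iff_rpow_le one_lt_two hA]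
  calc (2 : ℝ) ^ lam' = 2 ^ lam' * 1 := (mul_one _).symm
    _ ≤ 2 ^ lam' * (2 ^ (-lam') * Fintype.card A) := by gcongr
    _ = Fintype.card A := by
      rw [← mul_assoc, ← Real.rpow_add two_pos, add_neg_cancel, Real.rpow_zero, one_mul]

section Walsh

variable {n : ℕ}

def walsh (z y : Fin n → Bool) : ℤ := ∏ i, if z i && y i then -1 else 1

lemma walsh_mul_self (z y : Fin n → Bool) : walsh z y * walsh z y = 1 := by
  rw [walsh, ← prod_mul_distrib]
  exact prod_eq_one fun i _ => by split_ifs <;> norm_num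

lemma sum_walsh_mul_walsh (y y' : Fin n → Bool) :
    ∑ z, walsh z y * walsh z y' = if y = y' then 2 ^ n else 0 := by
  simp only [walsh, ← prod_mul_distrib]
  rw [← Fintype.prod_sum fun i b => (if b && y i then -1 else 1) * (if b && y' i then -1 else 1)]
  have h (i : Fin n) : ∑ b : Bool, (if b && y i then (-1 : ℤ) else 1) *
      (if b && y' i then -1 else 1) = if y i = y' i then 2 else 0 := by
    cases y i <;> cases y' i <;> decide
  simp only [h]
  simp [prod_ite_zero, funext_iff]

variable {𝕜 E : Type*} [RCLike 𝕜]

lemma sum_vecMulVec_walsh_smul (J : Finset (Fin n → Bool)) (v : (Fin n → Bool) → E → 𝕜) :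
    ∑ z, vecMulVec (∑ y ∈ J, walsh z y • v y) (star (∑ y ∈ J, walsh z y • v y)) =
      2 ^ n • ∑ y ∈ J, vecMulVec (v y) (star (v y)) := by
  have hw (y y' : Fin n → Bool) : ∑ z, (walsh z y : 𝕜) * walsh z y' =
      if y = y' then 2 ^ n else 0 := by
    exact_mod_cast congrArg (Int.cast : ℤ → 𝕜) (sum_walsh_mul_walsh y y')
  ext a b
  simp only [Matrix.sum_apply, vecMulVec_apply, Finset.sum_apply, star_sum, Pi.star_apply,
    Pi.smul_apply, star_zsmul, Finset.sum_mul_sum, Matrix.smul_apply]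
  calc _ = ∑ y ∈ J, ∑ y' ∈ J,
        (∑ z, (walsh z y : 𝕜) * walsh z y') * (v y a * star (v y' b)) := by
        rw [Finset.sum_comm]
        refine sum_congr rfl fun y _ => ?_
        rw [Finset.sum_comm]
        refine sum_congr rfl fun y' _ => ?_
        rw [Finset.sum_mul]
        refine sum_congr rfl fun z _ => ?_
        simp only [zsmul_eq_mul]
        ring
    _ = _ := by simp [hw, Finset.smul_sum]

lemma vecMulVec_walsh_smul_le [Fintype E] (J : Finset (Fin n → Bool)) (z : Fin n → Bool)
    (v : (Fin n → Bool) → E → 𝕜) :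
    vecMulVec (∑ y ∈ J, walsh z y • v y) (star (∑ y ∈ J, walsh z y • v y)) ≤
      #J • ∑ y ∈ J, vecMulVec (v y) (star (v y)) := by
  simpa only [star_zsmul, smul_vecMulVec, vecMulVec_smul, smul_smul, walsh_mul_self, one_smul]
    using vecMulVec_sum_le_card_smul J fun y => walsh z y • v y

end Walsh

section GHZ

variable {n p : ℕ}

def flipRest (z : Fin n → Bool) (r : Fin n → Fin p → Bool) : Fin n → Fin p → Bool :=
  fun i j => xor (r i j) (z i)

lemma flipRest_involutive (z : Fin n → Bool) : Function.Involutive (flipRest (p := p) z) := by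
  intro r; funext i j; simp [flipRest]

lemma sum_cons_cons {β M : Type*} [Fintype β] [AddCommMonoid M]
    (F : (Fin n → Fin (p + 1) → β) → M) :
    ∑ s, F s = ∑ z : Fin n → β, ∑ r : Fin n → Fin p → β, F fun i => Fin.cons (z i) (r i) := by
  rw [← Fintype.sum_prod_type']
  exact (Fintype.sum_equiv ((Equiv.arrowProdEquivProdArrow _ _ _).symm.trans
    (Equiv.piCongrRight fun _ => Fin.consEquiv _)) _ _ fun _ => rfl).symm

lemma ghzAmp_cons (a : Fin p → Bool) (b c : Bool) (r : Fin p → Bool) :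
    ghzAmp p a b (Fin.cons c r) = ((Real.sqrt 2)⁻¹ : ℂ) *
      (((if c && b then -1 else 1 : ℤ) : ℂ) * if a = fun j => xor (r j) c then 1 else 0) := by
  have hnot : (r = fun j => !a j) ↔ a = fun j => !r j := by
    constructor <;> rintro rfl <;> simp
  cases c <;> cases b <;> simp [ghzAmp, Fin.cons_inj, eq_comm, hnot]

lemma prod_ghzAmp_cons (x : Fin n → Fin p → Bool) (y z : Fin n → Bool)
    (r : Fin n → Fin p → Bool) :
    ∏ i, ghzAmp p (x i) (y i) (Fin.cons (z i) (r i)) =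
      ((Real.sqrt 2)⁻¹ : ℂ) ^ n * ((walsh z y : ℂ) * if x = flipRest z r then 1 else 0) := by
  simp only [ghzAmp_cons, prod_mul_distrib, prod_const, card_univ, Fintype.card_fin, walsh,
    Int.cast_prod, prod_ite_zero]
  simp [funext_iff, flipRest]

end GHZ

section Measurement

variable {n p : ℕ} {E : Type*} (J : Finset (Fin n → Bool))
  (Evec : (Fin n → Fin p → Bool) → (Fin n → Bool) → E → ℂ)
  (ψ : ((Fin n → Fin (p + 1) → Bool) × E) → ℂ)

lemma state_cons_eq
    (hψ : ∀ s e, ψ (s, e) =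
      ∑ x : Fin n → Fin p → Bool, ∑ y ∈ J, (∏ i, ghzAmp p (x i) (y i) (s i)) * Evec x y e)
    (z : Fin n → Bool) (r : Fin n → Fin p → Bool) :
    (fun e => ψ (fun i => Fin.cons (z i) (r i), e)) =
      ((Real.sqrt 2)⁻¹ ^ n : ℝ) • ∑ y ∈ J, walsh z y • Evec (flipRest z r) y := by
  funext e
  simp only [hψ, prod_ghzAmp_cons, Pi.smul_apply, Finset.sum_apply, zsmul_eq_mul]
  rw [Finset.sum_comm, Finset.smul_sum]
  refine sum_congr rfl fun y _ => ?_
  simp only [mul_ite, ite_mul, mul_one, mul_zero, zero_mul, sum_ite_eq', mem_univ, if_true,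
    Pi.mul_apply, Complex.real_smul, Complex.ofReal_pow, Complex.ofReal_inv, Pi.intCast_apply]
  ring

noncomputable def postMeasurementState (z : Fin n → Bool) : Matrix E E ℂ :=
  ∑ r : Fin n → Fin p → Bool, vecMulVec (fun e => ψ (fun i => Fin.cons (z i) (r i), e))
    (star fun e => ψ (fun i => Fin.cons (z i) (r i), e))

noncomputable def ancillaState : Matrix E E ℂ :=
  ∑ x, ∑ y ∈ J, vecMulVec (Evec x y) (star (Evec x y))

lemma posSemidef_ancillaState [Fintype E] : (ancillaState J Evec).PosSemidef :=
  posSemidef_sum _ fun _ _ => posSemidef_sum _ fun _ _ => posSemidef_vecMulVec_self_star _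

variable {ψ} in
lemma trace_cqState_postMeasurementState [Fintype E]
    (hnorm : ∑ s : Fin n → Fin (p + 1) → Bool, ∑ e : E, ‖ψ (s, e)‖ ^ 2 = 1) :
    (cqState (postMeasurementState ψ)).trace = 1 := by
  simp only [trace_cqState, postMeasurementState, trace_sum, trace_vecMulVec, dotProduct,
    Pi.star_apply, RCLike.star_def, Complex.mul_conj, Complex.normSq_eq_norm_sq]
  rw [← sum_cons_cons fun s => ∑ e, ((‖ψ (s, e)‖ ^ 2 : ℝ) : ℂ)]
  exact_mod_cast hnorm

variable {J Evec ψ}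
variable (hψ : ∀ s e, ψ (s, e) =
      ∑ x : Fin n → Fin p → Bool, ∑ y ∈ J, (∏ i, ghzAmp p (x i) (y i) (s i)) * Evec x y e)
include hψ

lemma postMeasurementState_eq (z : Fin n → Bool) :
    postMeasurementState ψ z = ((2 : ℝ) ^ n)⁻¹ •
      ∑ x, vecMulVec (∑ y ∈ J, walsh z y • Evec x y) (star (∑ y ∈ J, walsh z y • Evec x y)) := by
  have hsq : ((Real.sqrt 2)⁻¹ ^ n * (Real.sqrt 2)⁻¹ ^ n : ℝ) = ((2 : ℝ) ^ n)⁻¹ := by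
    rw [← mul_pow, ← mul_inv, Real.mul_self_sqrt zero_le_two, inv_pow]
  simp only [postMeasurementState, state_cons_eq J Evec ψ hψ, star_smul, star_trivial,
    smul_vecMulVec, vecMulVec_smul, smul_smul, hsq, ← Finset.smul_sum]
  congr 1
  exact Equiv.sum_comp (flipRest_involutive z).toPerm
    (fun x => vecMulVec (∑ y ∈ J, walsh z y • Evec x y) (star (∑ y ∈ J, walsh z y • Evec x y)))

lemma sum_postMeasurementState [Fintype E] :
    ∑ z, postMeasurementState ψ z = ancillaState J Evec := by
  simp only [postMeasurementState_eq hψ, ← Finset.smul_sum]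
  rw [Finset.sum_comm]
  simp only [sum_vecMulVec_walsh_smul, ← Finset.smul_sum, ← Nat.cast_smul_eq_nsmul ℝ, smul_smul]
  rw [Nat.cast_pow, Nat.cast_ofNat, inv_mul_cancel₀ (by positivity), one_smul, ancillaState]

lemma postMeasurementState_le [Fintype E] (z : Fin n → Bool) :
    postMeasurementState ψ z ≤ ((#J : ℝ) / 2 ^ n) • ancillaState J Evec := by
  rw [postMeasurementState_eq hψ, ancillaState, div_eq_inv_mul, mul_smul,
    Nat.cast_smul_eq_nsmul]
  refine smul_le_smul_of_nonneg_left ?_ (by positivity)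
  rw [Finset.smul_sum]
  exact sum_le_sum fun x _ => vecMulVec_walsh_smul_le J z (Evec x)

end Measurement

/-- Lemma 4 of the paper.  Let `|ψ⟩ = Σ_{x∈B_p^n} Σ_{y∈J} |g^{p+1}(x;y)⟩|E_{x,y}⟩` be
normalized (the `|E_{x,y}⟩` subnormalized).  Measuring the first qubit of each of the
`n` GHZ registers in the `Z` basis and discarding the remaining qubits yields a cq-state
`ρ_{ZE}` with `H_∞(Z|E)_ρ ≥ n − log₂|J|`. -/
theorem stmt_10 (n p : ℕ) {E : Type*} [Fintype E] [DecidableEq E]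
    (J : Finset (Fin n → Bool)) (hJ : J.Nonempty)
    (Evec : (Fin n → Fin p → Bool) → (Fin n → Bool) → E → ℂ)
    (ψ : ((Fin n → Fin (p + 1) → Bool) × E) → ℂ)
    (hψ : ∀ s e, ψ (s, e) =
      ∑ x : Fin n → Fin p → Bool, ∑ y ∈ J,
        (∏ i, ghzAmp p (x i) (y i) (s i)) * Evec x y e)
    (hnorm : ∑ s : Fin n → Fin (p + 1) → Bool, ∑ e : E, ‖ψ (s, e)‖ ^ 2 = 1) :
    condMinEntropy (A := Fin n → Bool) (E := E)
        (fun u v => if u.1 = v.1 then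
          ∑ rest : Fin n → Fin p → Bool,
            ψ (fun i => Fin.cons (u.1 i) (rest i), u.2) *
              (starRingEnd ℂ) (ψ (fun i => Fin.cons (v.1 i) (rest i), v.2))
          else 0) ≥ (n : ℝ) - Real.logb 2 J.card := by
  have htr := trace_cqState_postMeasurementState hnorm
  have hσ : (ancillaState J Evec).trace = 1 := by
    rw [← sum_postMeasurementState hψ, trace_sum, ← trace_cqState, htr]
  have hscale : (2 : ℝ) ^ (-((n : ℝ) - Real.logb 2 #J)) = #J / 2 ^ n := by
    rw [neg_sub, Real.rpow_sub two_pos, Real.rpow_logb two_pos (by norm_num)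
      (by exact_mod_cast hJ.card_pos), Real.rpow_natCast]
  rw [ge_iff_le]
  convert le_condMinEntropy htr (posSemidef_ancillaState J Evec) hσ ?_ using 2
  · congr 1
    ext u v
    rw [cqState_apply]
    split_ifs with h
    · simp [postMeasurementState, Matrix.sum_apply, vecMulVec_apply, h]
    · rfl
  · rw [hscale, ← kronecker_smul]
    exact cqState_le_one_kronecker (postMeasurementState_le hψ)
end
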